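/- Let 𝐗₁ = (X,𝕏₁) and 𝐗₂ = (X,𝕏₂) be p-rough paths controlled by ω on [0,T] with the same trace X, and let (H,H') ∈ 𝒟_X(L(ℝ^d,ℝ^e)). Then D_{st} := 𝕏₂;st − 𝕏₁;st satisfies D_{st} = D_{su} + D_{ut} for s ≤ u ≤ t and |D_{st}| ≤ C ω(s,t)^{2/p} for some constant C, and for all 0 ≤ s ≤ t ≤ T: ∫_s^t H d𝐗₂ = ∫_s^t H d𝐗₁ + ∫_s^t H' dD, where the last term is the Young integral of H' against D. In particular, taking 𝐗₂ to be the geometrisation g𝐗₁, one has ∫_s^t H d(g𝐗₁) = ∫_s^t H d𝐗₁ + ½ ∫_s^t H' d[𝐗₁]. -/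

import Mathlib

/-!
Chen's identity for two rough paths with the same trace makes `D = 𝕏₂ - 𝕏₁` additive, and the
compensated Riemann sums against `𝐗₂` are those against `𝐗₁` plus the Young sums `∑ H'_u D_{uv}`;
so once both rough integrals exist, the Young integral exists and is their difference. Likewise
`g𝕏₁` is a rough path with `g𝕏₁ - 𝕏₁ = ½ [𝐗₁]`. Rough integrals exist by the sewing lemma: the
increments `δ_{sut} = -R_{su} X_{ut} + (H'_s - H'_u) 𝕏_{ut}` of the germ `H_u X_{uv} + H'_u 𝕏_{uv}`
are `O(ω(s,t)^θ)` with `θ = 3/p > 1`.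

For the sewing lemma, removing one at a time a point whose two neighbouring intervals carry at
most `2ω/(n+1)` gives the maximal inequality `‖∑_π f - f a b‖ ≤ K ω(a,b)^θ`. Two partitions are
compared through their common refinement, written on each interval `[a, b]` of one of them as the
points of the other clamped to `[a, b]`; the Riemann sums then differ by at most
`K ∑ ω(u,v)^θ ≤ K (max ω(u,v))^(θ-1) ω(s,t)`, which tends to zero with the mesh by uniform
continuity of `ω`. So the Riemann sums form a Cauchy filter along `comap mesh (𝓝 0)`, and its
limit is the limit along every sequence of partitions whose mesh tends to zero.
-/

open Filter Topology Set

noncomputable section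

/-- `ω` is a control on `[0,T]`: continuous on the simplex, vanishing on the diagonal,
superadditive and nonnegative. -/
def IsControl (T : ℝ) (ω : ℝ → ℝ → ℝ) : Prop :=
  ContinuousOn (fun q : ℝ × ℝ => ω q.1 q.2) {q : ℝ × ℝ | 0 ≤ q.1 ∧ q.1 ≤ q.2 ∧ q.2 ≤ T} ∧
    (∀ t : ℝ, 0 ≤ t → t ≤ T → ω t t = 0) ∧
    (∀ s u t : ℝ, 0 ≤ s → s ≤ u → u ≤ t → t ≤ T → ω s u + ω u t ≤ ω s t) ∧
    (∀ s t : ℝ, 0 ≤ s → s ≤ t → t ≤ T → 0 ≤ ω s t)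

/-- Membership in `C^{1/r}_ω([0,T],V)`: continuity on `[0,T]` together with the increment
bound `‖Y_t − Y_s‖ ≤ C ω(s,t)^r`. -/
def HolderPath (T r : ℝ) (ω : ℝ → ℝ → ℝ) {V : Type*} [NormedAddCommGroup V]
    (Y : ℝ → V) : Prop :=
  ContinuousOn Y (Set.Icc 0 T) ∧
    ∃ C : ℝ, ∀ s t : ℝ, 0 ≤ s → s ≤ t → t ≤ T → ‖Y t - Y s‖ ≤ C * ω s t ^ r

/-- `(X, XX)` is a `p`-rough path controlled by `ω` on `[0,T]`. -/
def IsRoughPath (T p : ℝ) (ω : ℝ → ℝ → ℝ) {d : ℕ}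
    (X : ℝ → Fin d → ℝ) (XX : ℝ → ℝ → Fin d → Fin d → ℝ) : Prop :=
  HolderPath T (1 / p) ω X ∧
    ContinuousOn (fun q : ℝ × ℝ => XX q.1 q.2) {q : ℝ × ℝ | 0 ≤ q.1 ∧ q.1 ≤ q.2 ∧ q.2 ≤ T} ∧
    (∃ C : ℝ, ∀ s t : ℝ, 0 ≤ s → s ≤ t → t ≤ T → ‖XX s t‖ ≤ C * ω s t ^ (2 / p)) ∧
    (∀ s u t : ℝ, 0 ≤ s → s ≤ u → u ≤ t → t ≤ T → ∀ α β : Fin d,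
      XX s t α β = XX s u α β + (X u α - X s α) * (X t β - X u β) + XX u t α β)

/-- `(H, H')` is an `X`-controlled path with values in `V`; `H' t γ` is the Gubinelli
derivative at time `t` in the direction of the `γ`-th coordinate. -/
def IsControlledPath (T p : ℝ) (ω : ℝ → ℝ → ℝ) {d : ℕ} (X : ℝ → Fin d → ℝ)
    {V : Type*} [NormedAddCommGroup V] [NormedSpace ℝ V]
    (H : ℝ → V) (H' : ℝ → Fin d → V) : Prop :=
  HolderPath T (1 / p) ω H ∧ HolderPath T (1 / p) ω H' ∧
    ∃ C : ℝ, ∀ s t : ℝ, 0 ≤ s → s ≤ t → t ≤ T →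
      ‖H t - H s - ∑ γ, (X t γ - X s γ) • H' s γ‖ ≤ C * ω s t ^ (2 / p)

/-- The bracket `[𝐗]` of the rough path `(X, XX)`. -/
def bracket {d : ℕ} (X : ℝ → Fin d → ℝ) (XX : ℝ → ℝ → Fin d → Fin d → ℝ)
    (s t : ℝ) (α β : Fin d) : ℝ :=
  (X t α - X s α) * (X t β - X s β) - (XX s t α β + XX s t β α)

/-- A partition of `[s,t]` into `n` consecutive intervals. -/
structure RPathPartition (s t : ℝ) where
  n : ℕ
  pts : ℕ → ℝ
  mono : Monotone pts
  first : pts 0 = s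
  last : pts n = t

/-- The mesh of a partition. -/
def RPathPartition.mesh {s t : ℝ} (π : RPathPartition s t) : ℝ :=
  ⨆ i : Fin π.n, (π.pts (i.1 + 1) - π.pts i.1)

/-- The Riemann sum of a two-parameter summand along a partition. -/
def riemannSum {s t : ℝ} {V : Type*} [AddCommMonoid V]
    (π : RPathPartition s t) (f : ℝ → ℝ → V) : V :=
  ∑ i ∈ Finset.range π.n, f (π.pts i) (π.pts (i + 1))

/-- `L` is the limit of the Riemann sums of `f` along every sequence of partitions of `[s,t]`
with mesh tending to `0`. -/
def RSumLimit {V : Type*} [AddCommMonoid V] [TopologicalSpace V] (s t : ℝ)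
    (f : ℝ → ℝ → V) (L : V) : Prop :=
  ∀ π : ℕ → RPathPartition s t,
    Tendsto (fun n => (π n).mesh) atTop (𝓝 0) →
      Tendsto (fun n => riemannSum (π n) f) atTop (𝓝 L)

/-- The compensated Riemann summand `H_u X_{uv} + H'_u 𝕏_{uv}` of a controlled integrand
against a rough path. -/
def roughSummand {d e : ℕ} (X : ℝ → Fin d → ℝ) (XX : ℝ → ℝ → Fin d → Fin d → ℝ)
    (H : ℝ → Fin e → Fin d → ℝ) (H' : ℝ → Fin d → Fin e → Fin d → ℝ) :
    ℝ → ℝ → Fin e → ℝ :=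
  fun u v k => (∑ γ, H u k γ * (X v γ - X u γ)) + ∑ α, ∑ β, H' u α k β * XX u v α β

/-- The partial derivative `∂_α f^i (x)`. -/
def pderiv {m n : ℕ} (f : (Fin m → ℝ) → (Fin n → ℝ)) (x : Fin m → ℝ)
    (α : Fin m) (i : Fin n) : ℝ :=
  fderiv ℝ f x (Pi.single α 1) i

/-- The second partial derivative `∂_{αβ} f^k (x)`. -/
def pderiv2 {m n : ℕ} (f : (Fin m → ℝ) → (Fin n → ℝ)) (x : Fin m → ℝ)
    (α β : Fin m) (k : Fin n) : ℝ :=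
  fderiv ℝ (fun y => fderiv ℝ f y (Pi.single β 1) k) x (Pi.single α 1)


theorem isCompact_simplex (T : ℝ) : IsCompact {q : ℝ × ℝ | 0 ≤ q.1 ∧ q.1 ≤ q.2 ∧ q.2 ≤ T} := by
  refine (isCompact_Icc.prod (isCompact_Icc (a := (0 : ℝ)) (b := T))).of_isClosed_subset ?_
    fun q ⟨h1, h2, h3⟩ => ⟨⟨h1, h2.trans h3⟩, ⟨h1.trans h2, h3⟩⟩
  exact (isClosed_le continuous_const continuous_fst).inter
    ((isClosed_le continuous_fst continuous_snd).inter
      (isClosed_le continuous_snd continuous_const))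

namespace IsControl

variable {T : ℝ} {ω : ℝ → ℝ → ℝ}

theorem nonneg (hω : IsControl T ω) {s t : ℝ} (hs : 0 ≤ s) (hst : s ≤ t) (ht : t ≤ T) :
    0 ≤ ω s t :=
  hω.2.2.2 s t hs hst ht

theorem apply_self (hω : IsControl T ω) {t : ℝ} (h0 : 0 ≤ t) (hT : t ≤ T) : ω t t = 0 :=
  hω.2.1 t h0 hT

theorem add_le (hω : IsControl T ω) {s u t : ℝ} (hs : 0 ≤ s) (hsu : s ≤ u) (hut : u ≤ t)
    (ht : t ≤ T) : ω s u + ω u t ≤ ω s t :=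
  hω.2.2.1 s u t hs hsu hut ht

theorem mono (hω : IsControl T ω) {a s t b : ℝ} (ha : 0 ≤ a) (has : a ≤ s) (hst : s ≤ t)
    (htb : t ≤ b) (hb : b ≤ T) : ω s t ≤ ω a b := by
  have := hω.add_le ha has (hst.trans htb) hb
  have := hω.add_le (ha.trans has) hst htb hb
  have := hω.nonneg ha has (hst.trans (htb.trans hb))
  have := hω.nonneg ((ha.trans has).trans hst) htb hb
  linarith

theorem rpow_mul_rpow_le (hω : IsControl T ω) {a b : ℝ} (ha : 0 ≤ a) (hb : 0 ≤ b)
    {s u t : ℝ} (hs : 0 ≤ s) (hsu : s ≤ u) (hut : u ≤ t) (ht : t ≤ T) :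
    ω s u ^ a * ω u t ^ b ≤ ω s t ^ (a + b) := by
  rw [Real.rpow_add_of_nonneg (hω.nonneg hs (hsu.trans hut) ht) ha hb]
  have hut0 := hω.nonneg (hs.trans hsu) hut ht
  exact mul_le_mul (Real.rpow_le_rpow (hω.nonneg hs hsu (hut.trans ht))
    (hω.mono hs le_rfl hsu hut ht) ha) (Real.rpow_le_rpow hut0 (hω.mono hs hsu hut le_rfl ht) hb)
    (Real.rpow_nonneg hut0 b) (Real.rpow_nonneg (hω.nonneg hs (hsu.trans hut) ht) a)

theorem exists_nonneg_bound (hω : IsControl T ω) {r : ℝ} {g : ℝ → ℝ → ℝ}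
    (h : ∃ C : ℝ, ∀ s t : ℝ, 0 ≤ s → s ≤ t → t ≤ T → g s t ≤ C * ω s t ^ r) :
    ∃ C : ℝ, 0 ≤ C ∧ ∀ s t : ℝ, 0 ≤ s → s ≤ t → t ≤ T → g s t ≤ C * ω s t ^ r := by
  obtain ⟨C, hC⟩ := h
  refine ⟨max C 0, le_max_right _ _, fun s t hs hst ht => (hC s t hs hst ht).trans ?_⟩
  gcongr
  · exact Real.rpow_nonneg (hω.nonneg hs hst ht) r
  · exact le_max_left _ _

theorem sum_le (hω : IsControl T ω) {c : ℕ → ℝ} (hc : Monotone c) (h0 : 0 ≤ c 0) {n : ℕ}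
    (hn : c n ≤ T) : ∑ i ∈ Finset.range n, ω (c i) (c (i + 1)) ≤ ω (c 0) (c n) := by
  induction n with
  | zero => simpa using hω.nonneg h0 le_rfl hn
  | succ n ih =>
    have hcn : c n ≤ T := (hc n.le_succ).trans hn
    rw [Finset.sum_range_succ]
    linarith [ih hcn, hω.add_le h0 (hc (Nat.zero_le n)) (hc n.le_succ) hn]

/-- Among the `⌊(n + 2) / 2⌋` disjoint pairs of neighbouring intervals `[c (2j), c (2j + 2)]`
one has at most the average share of `ω (c 0) (c (n + 2))`. -/
theorem exists_le_div (hω : IsControl T ω) {c : ℕ → ℝ} (hc : Monotone c) (h0 : 0 ≤ c 0)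
    {n : ℕ} (hn : c (n + 2) ≤ T) :
    ∃ a ≤ n, ω (c a) (c (a + 2)) ≤ 2 * ω (c 0) (c (n + 2)) / (n + 1) := by
  set J := (n + 2) / 2
  set w := ω (c 0) (c (n + 2))
  have hJ : (0 : ℝ) < J := by exact_mod_cast (show 0 < J by omega)
  have hsum : ∑ j ∈ Finset.range J, ω (c (2 * j)) (c (2 * j + 2)) ≤
      ∑ _j ∈ Finset.range J, w / J := by
    rw [Finset.sum_const, Finset.card_range, nsmul_eq_mul, mul_div_cancel₀ _ hJ.ne']
    calc ∑ j ∈ Finset.range J, ω (c (2 * j)) (c (2 * j + 2))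
        ≤ ω (c (2 * 0)) (c (2 * J)) :=
          hω.sum_le (c := fun j => c (2 * j)) (hc.comp fun i j h => by omega) h0
            ((hc (by omega)).trans hn)
      _ ≤ w := hω.mono h0 le_rfl (hc (Nat.zero_le _)) (hc (by omega)) hn
  obtain ⟨j, hj, hjw⟩ := Finset.exists_le_of_sum_le (by simp; omega) hsum
  refine ⟨2 * j, by simp at hj; omega, hjw.trans ?_⟩
  rw [div_le_div_iff₀ hJ (by positivity)]
  have : (n : ℝ) + 1 ≤ 2 * J := by norm_cast; omega
  nlinarith [hω.nonneg h0 (hc (Nat.zero_le _)) hn]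

theorem exists_lt_of_sub_lt (hω : IsControl T ω) {δ : ℝ} (hδ : 0 < δ) :
    ∃ ρ > 0, ∀ u v : ℝ, 0 ≤ u → u ≤ v → v ≤ T → v - u < ρ → ω u v < δ := by
  obtain ⟨ρ, hρ, hωρ⟩ := Metric.uniformContinuousOn_iff.1
    ((isCompact_simplex T).uniformContinuousOn_of_continuous hω.1) δ hδ
  refine ⟨ρ, hρ, fun u v hu huv hv hvu => ?_⟩
  have hdist : dist (u, v) (u, u) < ρ := by
    rw [Prod.dist_eq, dist_self, Real.dist_eq, abs_of_nonneg (sub_nonneg.2 huv),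
      max_eq_right (sub_nonneg.2 huv)]
    exact hvu
  have := hωρ (u, v) ⟨hu, huv, hv⟩ (u, u) ⟨hu, le_rfl, huv.trans hv⟩ hdist
  rw [Real.dist_eq, hω.apply_self hu (huv.trans hv), sub_zero] at this
  exact (le_abs_self _).trans_lt this

end IsControl

theorem Real.rpow_le_rpow_sub_one_mul {x δ θ : ℝ} (hθ : 1 ≤ θ) (hx : 0 ≤ x) (hxδ : x ≤ δ) :
    x ^ θ ≤ δ ^ (θ - 1) * x := by
  calc x ^ θ = x ^ (θ - 1 + 1) := by ring_nf
    _ = x ^ (θ - 1) * x := Real.rpow_add_one' hx (by linarith)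
    _ ≤ δ ^ (θ - 1) * x := by gcongr

def meshFilter (s t : ℝ) : Filter (RPathPartition s t) :=
  comap RPathPartition.mesh (𝓝 0)

theorem RSumLimit.of_tendsto {V : Type*} [AddCommMonoid V] [TopologicalSpace V] {s t : ℝ}
    {f : ℝ → ℝ → V} {L : V}
    (h : Tendsto (fun π => riemannSum π f) (meshFilter s t) (𝓝 L)) : RSumLimit s t f L :=
  fun _ hπ => h.comp (tendsto_comap_iff.2 hπ)

theorem RPathPartition.sub_le_mesh {s t : ℝ} (π : RPathPartition s t) {i : ℕ} (hi : i < π.n) :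
    π.pts (i + 1) - π.pts i ≤ π.mesh :=
  le_ciSup (f := fun j : Fin π.n => π.pts (j + 1) - π.pts j) (Set.finite_range _).bddAbove ⟨i, hi⟩

/-- `∑ ω(u, v)^θ ≤ (max ω(u, v))^(θ - 1) ω(s, t)`, and `ω` is uniformly continuous. -/
theorem tendsto_riemannSum_rpow {T θ : ℝ} {ω : ℝ → ℝ → ℝ} (hω : IsControl T ω) (hθ : 1 < θ)
    {s t : ℝ} (hs : 0 ≤ s) (ht : t ≤ T) :
    Tendsto (fun π => riemannSum π fun u v => ω u v ^ θ) (meshFilter s t) (𝓝 0) := by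
  have hnn : ∀ π : RPathPartition s t, ∀ i ≤ π.n, 0 ≤ π.pts i ∧ π.pts i ≤ T := fun π i hi =>
    ⟨(hs.trans_eq π.first.symm).trans (π.mono (Nat.zero_le i)),
      (π.mono hi).trans (π.last.trans_le ht)⟩
  refine tendsto_order.2 ⟨fun a ha => Eventually.of_forall fun π => ha.trans_le ?_, fun ε hε => ?_⟩
  · refine Finset.sum_nonneg fun i hi => Real.rpow_nonneg ?_ θ
    rw [Finset.mem_range] at hi
    exact hω.nonneg (hnn π i hi.le).1 (π.mono i.le_succ) (hnn π (i + 1) hi).2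
  have hsmall : Tendsto (fun δ : ℝ => δ ^ (θ - 1) * ω s t) (𝓝 0) (𝓝 0) := by
    simpa [Real.zero_rpow (by linarith : θ - 1 ≠ 0)] using
      ((Real.continuousAt_rpow_const 0 (θ - 1) (Or.inr (by linarith))).tendsto.mul_const (ω s t))
  obtain ⟨δ, hδε, hδ⟩ := (((hsmall.mono_left nhdsWithin_le_nhds).eventually (gt_mem_nhds hε)).and
    (self_mem_nhdsWithin (s := Set.Ioi 0))).exists
  obtain ⟨ρ, hρ, hωρ⟩ := hω.exists_lt_of_sub_lt hδ
  filter_upwards [tendsto_comap.eventually (gt_mem_nhds hρ)] with π hπ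
  refine lt_of_le_of_lt ?_ hδε
  calc riemannSum π (fun u v => ω u v ^ θ)
      ≤ ∑ i ∈ Finset.range π.n, δ ^ (θ - 1) * ω (π.pts i) (π.pts (i + 1)) := by
        refine Finset.sum_le_sum fun i hi => ?_
        rw [Finset.mem_range] at hi
        have h0 := (hnn π i hi.le).1
        have hT := (hnn π (i + 1) hi).2
        exact Real.rpow_le_rpow_sub_one_mul hθ.le (hω.nonneg h0 (π.mono i.le_succ) hT)
          (hωρ _ _ h0 (π.mono i.le_succ) hT ((π.sub_le_mesh hi).trans_lt hπ)).le
    _ ≤ δ ^ (θ - 1) * ω s t := by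
        rw [← Finset.mul_sum]
        have := hω.sum_le π.mono (hs.trans_eq π.first.symm) (π.last.trans_le ht)
        rw [π.first, π.last] at this
        exact mul_le_mul_of_nonneg_left this (Real.rpow_nonneg hδ.le _)

section Linearity

variable {V : Type*} [AddCommGroup V] [TopologicalSpace V] {s t : ℝ} {f g : ℝ → ℝ → V} {L M : V}

theorem RSumLimit.sub [IsTopologicalAddGroup V] (hf : RSumLimit s t f L)
    (hg : RSumLimit s t g M) : RSumLimit s t (fun u v => f u v - g u v) (L - M) :=
  fun π hπ => by simpa only [riemannSum, Finset.sum_sub_distrib] using (hf π hπ).sub (hg π hπ)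

theorem RSumLimit.const_smul [Module ℝ V] [ContinuousConstSMul ℝ V] (c : ℝ)
    (hf : RSumLimit s t f L) : RSumLimit s t (fun u v => c • f u v) (c • L) :=
  fun π hπ => by simpa only [riemannSum, Finset.smul_sum] using (hf π hπ).const_smul c

end Linearity

section Sewing

variable {V : Type*} [NormedAddCommGroup V] {T θ C : ℝ} {ω : ℝ → ℝ → ℝ} {f : ℝ → ℝ → V}

def chainSum (f : ℝ → ℝ → V) (c : ℕ → ℝ) (n : ℕ) : V :=
  ∑ i ∈ Finset.range n, f (c i) (c (i + 1))

def removePoint (c : ℕ → ℝ) (j : ℕ) : ℕ → ℝ :=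
  fun k => if k < j then c k else c (k + 1)

theorem Monotone.removePoint {c : ℕ → ℝ} (hc : Monotone c) (j : ℕ) :
    Monotone (removePoint c j) := by
  intro k l hkl
  unfold _root_.removePoint
  split_ifs <;> apply hc <;> omega

theorem chainSum_removePoint (f : ℝ → ℝ → V) (c : ℕ → ℝ) {a n : ℕ} (han : a ≤ n) :
    chainSum f (removePoint c (a + 1)) (n + 1) = chainSum f c (n + 2) +
      (f (c a) (c (a + 2)) - f (c a) (c (a + 1)) - f (c (a + 1)) (c (a + 2))) := by
  induction n, han using Nat.le_induction with
  | base =>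
    have hlow : ∀ k ∈ Finset.range a, f (removePoint c (a + 1) k) (removePoint c (a + 1) (k + 1))
        = f (c k) (c (k + 1)) := fun k hk => by
      simp only [Finset.mem_range] at hk
      simp only [removePoint, if_pos (show k < a + 1 by omega),
        if_pos (show k + 1 < a + 1 by omega)]
    rw [chainSum, chainSum, Finset.sum_range_succ, Finset.sum_congr rfl hlow,
      Finset.sum_range_succ, Finset.sum_range_succ]
    simp only [removePoint, lt_add_one, if_true, lt_irrefl, if_false]
    abel
  | succ n _ ih =>
    rw [chainSum, Finset.sum_range_succ, ← chainSum, ih, chainSum, chainSum,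
      Finset.sum_range_succ _ (n + 2)]
    simp only [removePoint, if_neg (show ¬ n + 1 < a + 1 by omega),
      if_neg (show ¬ n + 1 + 1 < a + 1 by omega)]
    abel

def clampIcc (a b x : ℝ) : ℝ := max a (min x b)

theorem clampIcc_mono (a b : ℝ) : Monotone (clampIcc a b) :=
  fun _ _ h => max_le_max le_rfl (min_le_min_right b h)

theorem clampIcc_of_le {a b x : ℝ} (hx : x ≤ a) : clampIcc a b x = a :=
  max_eq_left ((min_le_left _ _).trans hx)

theorem clampIcc_of_ge {a b x : ℝ} (hab : a ≤ b) (hx : b ≤ x) : clampIcc a b x = b := by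
  rw [clampIcc, min_eq_right hx, max_eq_right hab]

/-- Both sides are `g` evaluated on the intersection `[a, b] ∩ [c, d]`, or on a degenerate
interval when the intersection is empty. -/
theorem apply_clampIcc_comm {g : ℝ → ℝ → V} (hg : ∀ x, 0 ≤ x → x ≤ T → g x x = 0)
    {a b c d : ℝ} (hab : a ≤ b) (hcd : c ≤ d) (ha : 0 ≤ a) (hc : 0 ≤ c) (hb : b ≤ T)
    (hd : d ≤ T) :
    g (clampIcc a b c) (clampIcc a b d) = g (clampIcc c d a) (clampIcc c d b) := by
  rcases lt_or_ge b c with hbc | hcb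
  · rw [clampIcc_of_ge hab hbc.le, clampIcc_of_ge hab (hbc.le.trans hcd),
      clampIcc_of_le (hab.trans hbc.le), clampIcc_of_le hbc.le, hg b (ha.trans hab) hb,
      hg c hc (hcd.trans hd)]
  rcases lt_or_ge d a with hda | had
  · rw [clampIcc_of_le (hcd.trans hda.le), clampIcc_of_le hda.le,
      clampIcc_of_ge hcd hda.le, clampIcc_of_ge hcd (hda.le.trans hab), hg a ha (hab.trans hb),
      hg d (hc.trans hcd) hd]
  simp only [clampIcc]
  rw [min_eq_left hcb, min_eq_left had, max_eq_right (le_min had hab),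
    max_eq_right (le_min hcb hcd), max_comm, min_comm]

def sewingConst (θ C : ℝ) : ℝ := C * 2 ^ θ * ∑' k : ℕ, (((k : ℝ) + 1) ^ θ)⁻¹

theorem sewingConst_nonneg (θ : ℝ) (hC : 0 ≤ C) : 0 ≤ sewingConst θ C :=
  mul_nonneg (by positivity) (tsum_nonneg fun _ => by positivity)

def DeltaBounded (T : ℝ) (ω : ℝ → ℝ → ℝ) (θ C : ℝ) (f : ℝ → ℝ → V) : Prop :=
  ∀ s u t : ℝ, 0 ≤ s → s ≤ u → u ≤ t → t ≤ T → ‖f s t - f s u - f u t‖ ≤ C * ω s t ^ θ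

namespace DeltaBounded

theorem apply_self (hω : IsControl T ω) (hθ : 0 < θ) (hf : DeltaBounded T ω θ C f) {u : ℝ}
    (h0 : 0 ≤ u) (hT : u ≤ T) : f u u = 0 := by
  have h := hf u u u h0 le_rfl le_rfl hT
  rw [hω.apply_self h0 hT, Real.zero_rpow hθ.ne', mul_zero, sub_self, zero_sub, norm_neg] at h
  exact norm_le_zero_iff.1 h

/-- Removing the point `c (a + 1)` given by `IsControl.exists_le_div` changes the sum by a
`δf` of norm at most `C (2ω/(n+1))^θ`; the induction adds up these costs. -/
theorem norm_chainSum_sub_le_sum (hω : IsControl T ω) (hθ : 0 < θ) (hC : 0 ≤ C)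
    (hf : DeltaBounded T ω θ C f) (n : ℕ) {c : ℕ → ℝ} (hc : Monotone c) (h0 : 0 ≤ c 0)
    (hT : c (n + 1) ≤ T) :
    ‖chainSum f c (n + 1) - f (c 0) (c (n + 1))‖ ≤
      C * 2 ^ θ * (∑ k ∈ Finset.range n, (((k : ℝ) + 1) ^ θ)⁻¹) * ω (c 0) (c (n + 1)) ^ θ := by
  induction n generalizing c with
  | zero => simp [chainSum]
  | succ n ih =>
    obtain ⟨a, han, ha⟩ := hω.exists_le_div hc h0 hT
    set w := ω (c 0) (c (n + 2))
    have hr0 : removePoint c (a + 1) 0 = c 0 := if_pos a.succ_pos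
    have hrn : removePoint c (a + 1) (n + 1) = c (n + 2) := if_neg (by omega)
    have hIH := ih (hc.removePoint (a + 1)) (hr0 ▸ h0) (hrn ▸ hT)
    rw [hr0, hrn] at hIH
    have hca : 0 ≤ c a := h0.trans (hc (Nat.zero_le a))
    have hcost : ‖f (c a) (c (a + 2)) - f (c a) (c (a + 1)) - f (c (a + 1)) (c (a + 2))‖ ≤
        C * 2 ^ θ * (((n : ℝ) + 1) ^ θ)⁻¹ * w ^ θ := by
      refine (hf _ _ _ hca (hc (by omega)) (hc (by omega)) ((hc (by omega)).trans hT)).trans ?_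
      have hpow := Real.rpow_le_rpow (hω.nonneg hca (hc (by omega)) ((hc (by omega)).trans hT))
        ha hθ.le
      rw [Real.div_rpow (by positivity [hω.nonneg h0 (hc (Nat.zero_le _)) hT]) (by positivity),
        Real.mul_rpow zero_le_two (hω.nonneg h0 (hc (Nat.zero_le _)) hT)] at hpow
      calc C * ω (c a) (c (a + 2)) ^ θ ≤ C * (2 ^ θ * w ^ θ / ((n : ℝ) + 1) ^ θ) := by gcongr
        _ = _ := by ring
    have hsplit : chainSum f c (n + 2) - f (c 0) (c (n + 2)) =
        (chainSum f (removePoint c (a + 1)) (n + 1) - f (c 0) (c (n + 2))) -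
          (f (c a) (c (a + 2)) - f (c a) (c (a + 1)) - f (c (a + 1)) (c (a + 2))) := by
      rw [chainSum_removePoint f c han]; abel
    rw [hsplit, Finset.sum_range_succ]
    calc _ ≤ _ := norm_sub_le _ _
      _ ≤ _ := add_le_add hIH hcost
      _ = _ := by ring

theorem norm_chainSum_sub_le (hω : IsControl T ω) (hθ : 1 < θ) (hC : 0 ≤ C)
    (hf : DeltaBounded T ω θ C f) {c : ℕ → ℝ} (hc : Monotone c) (h0 : 0 ≤ c 0) {n : ℕ}
    (hT : c n ≤ T) : ‖chainSum f c n - f (c 0) (c n)‖ ≤ sewingConst θ C * ω (c 0) (c n) ^ θ := by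
  have hθ0 : 0 < θ := by linarith
  cases n with
  | zero =>
    simp only [chainSum, Finset.range_zero, Finset.sum_empty, hf.apply_self hω hθ0 h0 hT,
      sub_zero, norm_zero]
    exact mul_nonneg (sewingConst_nonneg θ hC) (Real.rpow_nonneg (hω.nonneg h0 le_rfl hT) θ)
  | succ n =>
    refine (hf.norm_chainSum_sub_le_sum hω hθ0 hC n hc h0 hT).trans ?_
    have hsum : Summable fun k : ℕ => (((k : ℝ) + 1) ^ θ)⁻¹ := by
      simpa using (summable_nat_add_iff 1).2 (Real.summable_nat_rpow_inv.2 hθ)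
    unfold sewingConst
    gcongr
    · exact Real.rpow_nonneg (hω.nonneg h0 (hc (Nat.zero_le _)) hT) θ
    · exact hsum.sum_le_tsum _ fun _ _ => by positivity

theorem norm_chainSum_sub_sum_clampIcc_le (hω : IsControl T ω) (hθ : 1 < θ) (hC : 0 ≤ C)
    (hf : DeltaBounded T ω θ C f) {g h : ℕ → ℝ} (hg : Monotone g) (hh : Monotone h) {n m : ℕ}
    (hhg : h 0 ≤ g 0) (hgh : g n ≤ h m) (hg0 : 0 ≤ g 0) (hgn : g n ≤ T) :
    ‖chainSum f g n - ∑ i ∈ Finset.range n,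
        chainSum f (fun j => clampIcc (g i) (g (i + 1)) (h j)) m‖ ≤
      sewingConst θ C * chainSum (fun u v => ω u v ^ θ) g n := by
  rw [chainSum, ← Finset.sum_sub_distrib, chainSum, Finset.mul_sum]
  refine (norm_sum_le _ _).trans (Finset.sum_le_sum fun i hi => ?_)
  have hi : i < n := Finset.mem_range.1 hi
  have hgi : g i ≤ g (i + 1) := hg i.le_succ
  have h0 : clampIcc (g i) (g (i + 1)) (h 0) = g i :=
    clampIcc_of_le (hhg.trans (hg (Nat.zero_le i)))
  have hm : clampIcc (g i) (g (i + 1)) (h m) = g (i + 1) :=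
    clampIcc_of_ge hgi ((hg hi).trans hgh)
  have := hf.norm_chainSum_sub_le hω hθ hC ((clampIcc_mono _ _).comp hh)
    (h0 ▸ hg0.trans (hg (Nat.zero_le i))) (hm ▸ (hg hi).trans hgn)
  simp only [Function.comp_def, h0, hm] at this
  rwa [norm_sub_rev]

theorem norm_chainSum_sub_chainSum_le (hω : IsControl T ω) (hθ : 1 < θ) (hC : 0 ≤ C)
    (hf : DeltaBounded T ω θ C f) {g h : ℕ → ℝ} (hg : Monotone g) (hh : Monotone h) {n m : ℕ}
    (h0 : g 0 = h 0) (hnm : g n = h m) (hg0 : 0 ≤ g 0) (hgn : g n ≤ T) :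
    ‖chainSum f g n - chainSum f h m‖ ≤ sewingConst θ C *
      (chainSum (fun u v => ω u v ^ θ) g n + chainSum (fun u v => ω u v ^ θ) h m) := by
  have hθ0 : 0 < θ := by linarith
  -- both sides are the Riemann sum over the common refinement of the two chains
  have hcomm : ∑ i ∈ Finset.range n, chainSum f (fun j => clampIcc (g i) (g (i + 1)) (h j)) m =
      ∑ j ∈ Finset.range m, chainSum f (fun i => clampIcc (h j) (h (j + 1)) (g i)) n := by
    simp only [chainSum]
    rw [Finset.sum_comm]
    refine Finset.sum_congr rfl fun j hj => Finset.sum_congr rfl fun i hi => ?_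
    rw [Finset.mem_range] at hi hj
    exact apply_clampIcc_comm (fun x hx hxT => hf.apply_self hω hθ0 hx hxT) (hg i.le_succ)
      (hh j.le_succ) (hg0.trans (hg (Nat.zero_le i))) ((hg0.trans_eq h0).trans (hh (Nat.zero_le j)))
      ((hg hi).trans hgn) ((hh hj).trans (hnm.symm.trans_le hgn))
  have hgS := hf.norm_chainSum_sub_sum_clampIcc_le hω hθ hC hg hh h0.ge hnm.le hg0 hgn
  have hhS := hf.norm_chainSum_sub_sum_clampIcc_le hω hθ hC hh hg h0.le hnm.ge
    (hg0.trans_eq h0) (hnm.symm.trans_le hgn)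
  rw [← hcomm, norm_sub_rev] at hhS
  rw [mul_add]
  exact (norm_sub_le_norm_sub_add_norm_sub _ _ _).trans (add_le_add hgS hhS)

theorem cauchy_map_riemannSum (hω : IsControl T ω) (hθ : 1 < θ) (hC : 0 ≤ C)
    (hf : DeltaBounded T ω θ C f) {s t : ℝ} (hs : 0 ≤ s) (ht : t ≤ T)
    [(meshFilter s t).NeBot] : Cauchy (map (fun π => riemannSum π f) (meshFilter s t)) := by
  refine cauchy_map_iff.2 ⟨‹_›, tendsto_uniformity_iff_dist_tendsto_zero.2 ?_⟩
  have hA := tendsto_riemannSum_rpow hω hθ hs ht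
  refine squeeze_zero (fun _ => dist_nonneg) (fun p => ?_)
    (by simpa using ((hA.comp tendsto_fst).add (hA.comp tendsto_snd)).const_mul (sewingConst θ C))
  rw [dist_eq_norm]
  exact hf.norm_chainSum_sub_chainSum_le hω hθ hC p.1.mono p.2.mono
    (p.1.first.trans p.2.first.symm) (p.1.last.trans p.2.last.symm) (hs.trans_eq p.1.first.symm)
    (p.1.last.trans_le ht)

theorem exists_rSumLimit [CompleteSpace V] (hω : IsControl T ω) (hθ : 1 < θ) (hC : 0 ≤ C)
    (hf : DeltaBounded T ω θ C f) {s t : ℝ} (hs : 0 ≤ s) (ht : t ≤ T) :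
    ∃ L : V, RSumLimit s t f L := by
  rcases (meshFilter s t).eq_or_neBot with h | h
  · -- no partition of small mesh exists, which happens when `t < s`
    exact ⟨0, .of_tendsto (h ▸ tendsto_bot)⟩
  · obtain ⟨L, hL⟩ := cauchy_map_iff_exists_tendsto.1 (hf.cauchy_map_riemannSum hω hθ hC hs ht)
    exact ⟨L, .of_tendsto hL⟩

theorem exists_sewing [CompleteSpace V] (hω : IsControl T ω) (hθ : 1 < θ) (hC : 0 ≤ C)
    (hf : DeltaBounded T ω θ C f) :
    ∃ I : ℝ → ℝ → V, ∀ s t : ℝ, 0 ≤ s → t ≤ T → RSumLimit s t f (I s t) := by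
  choose! I hI using fun s t (hs : 0 ≤ s) (ht : t ≤ T) => hf.exists_rSumLimit hω hθ hC hs ht
  exact ⟨I, hI⟩

end DeltaBounded

end Sewing

section Matrices

variable {ι κ : Type*} [Fintype ι] [Fintype κ]

theorem abs_apply_apply_le_norm (x : ι → κ → ℝ) (i : ι) (j : κ) : |x i j| ≤ ‖x‖ :=
  (norm_le_pi_norm (x i) j).trans (norm_le_pi_norm x i)

theorem abs_sum_mul_le (a b : ι → ℝ) :
    |∑ i, a i * b i| ≤ Fintype.card ι * (‖a‖ * ‖b‖) := by
  calc |∑ i, a i * b i| ≤ ∑ i, |a i * b i| := Finset.abs_sum_le_sum_abs _ _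
    _ ≤ ∑ _i : ι, ‖a‖ * ‖b‖ := Finset.sum_le_sum fun i _ => by
        rw [abs_mul]
        exact mul_le_mul (norm_le_pi_norm a i) (norm_le_pi_norm b i) (abs_nonneg _)
          (norm_nonneg _)
    _ = Fintype.card ι * (‖a‖ * ‖b‖) := by simp

theorem abs_sum_sum_mul_le (a b : ι → κ → ℝ) :
    |∑ i, ∑ j, a i j * b i j| ≤ Fintype.card ι * Fintype.card κ * (‖a‖ * ‖b‖) := by
  calc |∑ i, ∑ j, a i j * b i j| ≤ ∑ i, |∑ j, a i j * b i j| := Finset.abs_sum_le_sum_abs _ _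
    _ ≤ ∑ _i : ι, Fintype.card κ * (‖a‖ * ‖b‖) := Finset.sum_le_sum fun i _ =>
        (abs_sum_mul_le (a i) (b i)).trans (by
          gcongr
          exacts [norm_le_pi_norm a i, norm_le_pi_norm b i])
    _ = Fintype.card ι * Fintype.card κ * (‖a‖ * ‖b‖) := by simp [mul_assoc]

end Matrices

section RoughPaths

variable {T p : ℝ} {ω : ℝ → ℝ → ℝ} {d e : ℕ} {X : ℝ → Fin d → ℝ}
  {XX XX₁ XX₂ : ℝ → ℝ → Fin d → Fin d → ℝ} {H : ℝ → Fin e → Fin d → ℝ}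
  {H' : ℝ → Fin d → Fin e → Fin d → ℝ}

theorem roughSummand_delta_apply {s u t : ℝ}
    (hChen : ∀ α β : Fin d,
      XX s t α β = XX s u α β + (X u α - X s α) * (X t β - X u β) + XX u t α β) (k : Fin e) :
    (roughSummand X XX H H' s t - roughSummand X XX H H' s u - roughSummand X XX H H' u t) k =
      -∑ β, (H u - H s - ∑ γ, (X u γ - X s γ) • H' s γ) k β * (X t - X u) β +
        ∑ α, ∑ β, (H' s - H' u) α k β * XX u t α β := by
  have hcross : ∑ α, ∑ β, H' s α k β * ((X u α - X s α) * (X t β - X u β)) =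
      ∑ β, (∑ γ, (X u γ - X s γ) • H' s γ) k β * (X t - X u) β := by
    simp only [Finset.sum_apply, Pi.smul_apply, smul_eq_mul, Pi.sub_apply, Finset.sum_mul]
    rw [Finset.sum_comm]
    exact Finset.sum_congr rfl fun _ _ => Finset.sum_congr rfl fun _ _ => by ring
  have hfirst : ∑ β, (H u - H s - ∑ γ, (X u γ - X s γ) • H' s γ) k β * (X t - X u) β =
      ∑ β, (H u k β - H s k β) * (X t β - X u β) -
        ∑ β, (∑ γ, (X u γ - X s γ) • H' s γ) k β * (X t - X u) β := by
    rw [← Finset.sum_sub_distrib]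
    exact Finset.sum_congr rfl fun _ _ => by simp only [Pi.sub_apply]; ring
  have hH : ∑ γ, H s k γ * (X t γ - X s γ) - ∑ γ, H s k γ * (X u γ - X s γ) -
      ∑ γ, H u k γ * (X t γ - X u γ) = -∑ β, (H u k β - H s k β) * (X t β - X u β) := by
    rw [← Finset.sum_sub_distrib, ← Finset.sum_sub_distrib, ← Finset.sum_neg_distrib]
    exact Finset.sum_congr rfl fun _ _ => by ring
  have hH' : ∑ α, ∑ β, H' s α k β * XX u t α β - ∑ α, ∑ β, H' u α k β * XX u t α β =
      ∑ α, ∑ β, (H' s - H' u) α k β * XX u t α β := by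
    simp only [← Finset.sum_sub_distrib, ← sub_mul, Pi.sub_apply]
  rw [hfirst, ← hcross, ← hH']
  simp only [roughSummand, Pi.sub_apply, hChen, mul_add, Finset.sum_add_distrib]
  linear_combination hH

theorem norm_roughSummand_delta_le {s u t : ℝ}
    (hChen : ∀ α β : Fin d,
      XX s t α β = XX s u α β + (X u α - X s α) * (X t β - X u β) + XX u t α β) :
    ‖roughSummand X XX H H' s t - roughSummand X XX H H' s u - roughSummand X XX H H' u t‖ ≤
      d * (‖H u - H s - ∑ γ, (X u γ - X s γ) • H' s γ‖ * ‖X t - X u‖) +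
        d * d * (‖H' u - H' s‖ * ‖XX u t‖) := by
  refine (pi_norm_le_iff_of_nonneg (by positivity)).2 fun k => ?_
  rw [Real.norm_eq_abs, roughSummand_delta_apply hChen]
  have hR := abs_sum_mul_le ((H u - H s - ∑ γ, (X u γ - X s γ) • H' s γ) k) (X t - X u)
  have hH' := abs_sum_sum_mul_le (fun α β => (H' s - H' u) α k β) (XX u t)
  have hRk := norm_le_pi_norm (H u - H s - ∑ γ, (X u γ - X s γ) • H' s γ) k
  have hH'k : ‖fun α β => (H' s - H' u) α k β‖ ≤ ‖H' u - H' s‖ :=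
    (pi_norm_le_iff_of_nonneg (norm_nonneg _)).2 fun α =>
      (norm_le_pi_norm ((H' s - H' u) α) k).trans
        ((norm_le_pi_norm _ α).trans (norm_sub_rev _ _).le)
  simp only [Fintype.card_fin] at hR hH'
  calc _ ≤ _ := abs_add_le _ _
    _ ≤ _ := add_le_add ((abs_neg _).trans_le hR) hH'
    _ ≤ _ := by gcongr

theorem IsRoughPath.deltaBounded_roughSummand (hω : IsControl T ω) (hp : 0 < p)
    (hX : IsRoughPath T p ω X XX) (hH : IsControlledPath T p ω X H H') :
    ∃ C, 0 ≤ C ∧ DeltaBounded T ω (3 / p) C (roughSummand X XX H H') := by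
  obtain ⟨CX, hCX, hXb⟩ := hω.exists_nonneg_bound hX.1.2
  obtain ⟨CXX, hCXX, hXXb⟩ := hω.exists_nonneg_bound hX.2.2.1
  obtain ⟨CH', hCH', hH'b⟩ := hω.exists_nonneg_bound hH.2.1.2
  obtain ⟨CR, hCR, hRb⟩ := hω.exists_nonneg_bound hH.2.2
  refine ⟨d * (CR * CX) + d * d * (CH' * CXX), by positivity, fun s u t hs hsu hut ht => ?_⟩
  have hsu0 := hω.nonneg hs hsu (hut.trans ht)
  have h21 := hω.rpow_mul_rpow_le (a := 2 / p) (b := 1 / p) (by positivity) (by positivity)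
    hs hsu hut ht
  have h12 := hω.rpow_mul_rpow_le (a := 1 / p) (b := 2 / p) (by positivity) (by positivity)
    hs hsu hut ht
  rw [show 2 / p + 1 / p = 3 / p by ring] at h21
  rw [show 1 / p + 2 / p = 3 / p by ring] at h12
  calc _ ≤ _ := norm_roughSummand_delta_le (hX.2.2.2 s u t hs hsu hut ht)
    _ ≤ d * ((CR * ω s u ^ (2 / p)) * (CX * ω u t ^ (1 / p))) +
          d * d * ((CH' * ω s u ^ (1 / p)) * (CXX * ω u t ^ (2 / p))) := by
        have := Real.rpow_nonneg hsu0 (2 / p)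
        have := Real.rpow_nonneg hsu0 (1 / p)
        gcongr
        exacts [hRb s u hs hsu (hut.trans ht), hXb u t (hs.trans hsu) hut ht,
          hH'b s u hs hsu (hut.trans ht), hXXb u t (hs.trans hsu) hut ht]
    _ = d * (CR * CX) * (ω s u ^ (2 / p) * ω u t ^ (1 / p)) +
          d * d * (CH' * CXX) * (ω s u ^ (1 / p) * ω u t ^ (2 / p)) := by ring
    _ ≤ d * (CR * CX) * ω s t ^ (3 / p) + d * d * (CH' * CXX) * ω s t ^ (3 / p) := by gcongr
    _ = _ := by ring

theorem IsRoughPath.exists_roughIntegral (hω : IsControl T ω) (hp : 0 < p) (hp3 : p < 3)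
    (hX : IsRoughPath T p ω X XX) (hH : IsControlledPath T p ω X H H') :
    ∃ I : ℝ → ℝ → Fin e → ℝ, ∀ s t : ℝ, 0 ≤ s → t ≤ T →
      RSumLimit s t (roughSummand X XX H H') (I s t) := by
  obtain ⟨C, hC, hδ⟩ := hX.deltaBounded_roughSummand hω hp hH
  exact hδ.exists_sewing hω ((one_lt_div hp).2 hp3) hC

theorem IsRoughPath.sub_eq_add_sub (hX₁ : IsRoughPath T p ω X XX₁)
    (hX₂ : IsRoughPath T p ω X XX₂) :
    ∀ s u t : ℝ, 0 ≤ s → s ≤ u → u ≤ t → t ≤ T → ∀ α β : Fin d,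
      XX₂ s t α β - XX₁ s t α β = (XX₂ s u α β - XX₁ s u α β) + (XX₂ u t α β - XX₁ u t α β) :=
  fun s u t hs hsu hut ht α β => by
    linarith [hX₁.2.2.2 s u t hs hsu hut ht α β, hX₂.2.2.2 s u t hs hsu hut ht α β]

theorem IsRoughPath.exists_norm_sub_le (hX₁ : IsRoughPath T p ω X XX₁)
    (hX₂ : IsRoughPath T p ω X XX₂) :
    ∃ C : ℝ, ∀ s t : ℝ, 0 ≤ s → s ≤ t → t ≤ T → ‖XX₂ s t - XX₁ s t‖ ≤ C * ω s t ^ (2 / p) := by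
  obtain ⟨C₁, hC₁⟩ := hX₁.2.2.1
  obtain ⟨C₂, hC₂⟩ := hX₂.2.2.1
  exact ⟨C₂ + C₁, fun s t hs hst ht => (norm_sub_le _ _).trans
    (by linarith [hC₁ s t hs hst ht, hC₂ s t hs hst ht])⟩

def geometrisation (X : ℝ → Fin d → ℝ) (XX : ℝ → ℝ → Fin d → Fin d → ℝ) :
    ℝ → ℝ → Fin d → Fin d → ℝ :=
  fun u v α β => (XX u v α β - XX u v β α) / 2 + (X v α - X u α) * (X v β - X u β) / 2

theorem IsRoughPath.continuousOn_geometrisation (hX : IsRoughPath T p ω X XX) :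
    ContinuousOn (fun q : ℝ × ℝ => geometrisation X XX q.1 q.2)
      {q : ℝ × ℝ | 0 ≤ q.1 ∧ q.1 ≤ q.2 ∧ q.2 ≤ T} := by
  have h1 : ContinuousOn (fun q : ℝ × ℝ => X q.1) {q : ℝ × ℝ | 0 ≤ q.1 ∧ q.1 ≤ q.2 ∧ q.2 ≤ T} :=
    hX.1.1.comp continuousOn_fst fun q hq => ⟨hq.1, hq.2.1.trans hq.2.2⟩
  have h2 : ContinuousOn (fun q : ℝ × ℝ => X q.2) {q : ℝ × ℝ | 0 ≤ q.1 ∧ q.1 ≤ q.2 ∧ q.2 ≤ T} :=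
    hX.1.1.comp continuousOn_snd fun q hq => ⟨hq.1.trans hq.2.1, hq.2.2⟩
  have h3 := hX.2.1
  refine continuousOn_pi.2 fun α => continuousOn_pi.2 fun β => ?_
  exact ((((continuousOn_pi.1 (continuousOn_pi.1 h3 α) β).sub
    (continuousOn_pi.1 (continuousOn_pi.1 h3 β) α)).div_const 2).add
    ((((continuousOn_pi.1 h2 α).sub (continuousOn_pi.1 h1 α)).mul
      ((continuousOn_pi.1 h2 β).sub (continuousOn_pi.1 h1 β))).div_const 2))

theorem norm_geometrisation_le (s t : ℝ) :
    ‖geometrisation X XX s t‖ ≤ ‖XX s t‖ + ‖X t - X s‖ ^ 2 / 2 := by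
  refine (pi_norm_le_iff_of_nonneg (by positivity)).2 fun α =>
    (pi_norm_le_iff_of_nonneg (by positivity)).2 fun β => ?_
  have ha := abs_le.1 (abs_apply_apply_le_norm (XX s t) α β)
  have hb := abs_le.1 (abs_apply_apply_le_norm (XX s t) β α)
  have hxy : |(X t α - X s α) * (X t β - X s β)| ≤ ‖X t - X s‖ ^ 2 := by
    rw [abs_mul, sq]
    exact mul_le_mul (norm_le_pi_norm (X t - X s) α) (norm_le_pi_norm (X t - X s) β)
      (abs_nonneg _) (norm_nonneg _)
  rw [Real.norm_eq_abs, geometrisation, abs_le]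
  constructor <;> linarith [abs_le.1 hxy]

theorem IsRoughPath.geometrisation (hω : IsControl T ω) (hX : IsRoughPath T p ω X XX) :
    IsRoughPath T p ω X (geometrisation X XX) := by
  refine ⟨hX.1, hX.continuousOn_geometrisation, ?_, fun s u t hs hsu hut ht α β => ?_⟩
  · obtain ⟨CX, hX'⟩ := hX.1.2
    obtain ⟨CXX, hXX⟩ := hX.2.2.1
    refine ⟨CXX + CX ^ 2 / 2, fun s t hs hst ht => (norm_geometrisation_le s t).trans ?_⟩
    have hsq : ‖X t - X s‖ ^ 2 ≤ CX ^ 2 * ω s t ^ (2 / p) := by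
      calc ‖X t - X s‖ ^ 2 ≤ (CX * ω s t ^ (1 / p)) ^ 2 :=
            pow_le_pow_left₀ (norm_nonneg _) (hX' s t hs hst ht) 2
        _ = CX ^ 2 * ω s t ^ (2 / p) := by
            rw [mul_pow, ← Real.rpow_mul_natCast (hω.nonneg hs hst ht)]
            ring_nf
    linarith [hXX s t hs hst ht]
  · simp only [_root_.geometrisation]
    rw [hX.2.2.2 s u t hs hsu hut ht α β, hX.2.2.2 s u t hs hsu hut ht β α]
    ring

def youngSummand (K : ℝ → Fin d → Fin e → Fin d → ℝ) (D : ℝ → ℝ → Fin d → Fin d → ℝ) :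
    ℝ → ℝ → Fin e → ℝ :=
  fun u v k => ∑ α, ∑ β, K u α k β * D u v α β

theorem youngSummand_sub :
    youngSummand H' (fun u v α β => XX₂ u v α β - XX₁ u v α β) =
      fun u v => roughSummand X XX₂ H H' u v - roughSummand X XX₁ H H' u v := by
  funext u v k
  simp only [roughSummand, youngSummand, Pi.sub_apply, add_sub_add_left_eq_sub,
    ← Finset.sum_sub_distrib, mul_sub]

theorem youngSummand_bracket :
    youngSummand H' (bracket X XX) = fun u v =>
      (2 : ℝ) • (roughSummand X (geometrisation X XX) H H' u v - roughSummand X XX H H' u v) := by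
  funext u v k
  simp only [youngSummand, roughSummand, Pi.smul_apply, Pi.sub_apply, smul_eq_mul,
    add_sub_add_left_eq_sub, ← Finset.sum_sub_distrib, Finset.mul_sum]
  exact Finset.sum_congr rfl fun _ _ => Finset.sum_congr rfl fun _ _ => by
    simp only [bracket, geometrisation]; ring

end RoughPaths


theorem statement17_general (T p : ℝ) (hp1 : 1 ≤ p) (hp3 : p < 3) (d e : ℕ)
    (ω : ℝ → ℝ → ℝ) (hω : IsControl T ω)
    (X : ℝ → Fin d → ℝ) (XX₁ XX₂ : ℝ → ℝ → Fin d → Fin d → ℝ)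
    (hX₁ : IsRoughPath T p ω X XX₁) (hX₂ : IsRoughPath T p ω X XX₂)
    (H : ℝ → Fin e → Fin d → ℝ) (H' : ℝ → Fin d → Fin e → Fin d → ℝ)
    (hH : IsControlledPath T p ω X H H') :
    (∀ s u t : ℝ, 0 ≤ s → s ≤ u → u ≤ t → t ≤ T → ∀ α β : Fin d,
      XX₂ s t α β - XX₁ s t α β =
        (XX₂ s u α β - XX₁ s u α β) + (XX₂ u t α β - XX₁ u t α β)) ∧
    (∃ C : ℝ, ∀ s t : ℝ, 0 ≤ s → s ≤ t → t ≤ T →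
      ‖(fun (α β : Fin d) => XX₂ s t α β - XX₁ s t α β)‖ ≤ C * ω s t ^ (2 / p)) ∧
    ∃ I₁ I₂ J Ig Jb : ℝ → ℝ → Fin e → ℝ,
      (∀ s t : ℝ, 0 ≤ s → s ≤ t → t ≤ T →
        RSumLimit s t (roughSummand X XX₁ H H') (I₁ s t)) ∧
      (∀ s t : ℝ, 0 ≤ s → s ≤ t → t ≤ T →
        RSumLimit s t (roughSummand X XX₂ H H') (I₂ s t)) ∧
      (∀ s t : ℝ, 0 ≤ s → s ≤ t → t ≤ T →
        RSumLimit s t (fun (u v : ℝ) (k : Fin e) =>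
          ∑ α, ∑ β, H' u α k β * (XX₂ u v α β - XX₁ u v α β)) (J s t)) ∧
      (∀ s t : ℝ, 0 ≤ s → s ≤ t → t ≤ T → I₂ s t = I₁ s t + J s t) ∧
      (∀ s t : ℝ, 0 ≤ s → s ≤ t → t ≤ T →
        RSumLimit s t (roughSummand X
          (fun u v α β => (XX₁ u v α β - XX₁ u v β α) / 2 +
            (X v α - X u α) * (X v β - X u β) / 2) H H') (Ig s t)) ∧
      (∀ s t : ℝ, 0 ≤ s → s ≤ t → t ≤ T →
        RSumLimit s t (fun (u v : ℝ) (k : Fin e) =>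
          ∑ α, ∑ β, H' u α k β * bracket X XX₁ u v α β) (Jb s t)) ∧
      (∀ s t : ℝ, 0 ≤ s → s ≤ t → t ≤ T → ∀ k : Fin e,
        Ig s t k = I₁ s t k + Jb s t k / 2) := by
  have hp : 0 < p := by linarith
  obtain ⟨I₁, hI₁⟩ := hX₁.exists_roughIntegral hω hp hp3 hH
  obtain ⟨I₂, hI₂⟩ := hX₂.exists_roughIntegral hω hp hp3 hH
  obtain ⟨Ig, hIg⟩ := (hX₁.geometrisation hω).exists_roughIntegral hω hp hp3 hH
  refine ⟨hX₁.sub_eq_add_sub hX₂, hX₁.exists_norm_sub_le hX₂,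
    I₁, I₂, I₂ - I₁, Ig, (2 : ℝ) • (Ig - I₁),
    fun s t hs _ ht => hI₁ s t hs ht, fun s t hs _ ht => hI₂ s t hs ht,
    fun s t hs _ ht => ?_, fun _ _ _ _ _ => (add_sub_cancel _ _).symm,
    fun s t hs _ ht => hIg s t hs ht, fun s t hs _ ht => ?_, fun _ _ _ _ _ _ => ?_⟩
  · change RSumLimit s t (youngSummand H' fun u v α β => XX₂ u v α β - XX₁ u v α β) _
    rw [youngSummand_sub]
    exact (hI₂ s t hs ht).sub (hI₁ s t hs ht)
  · change RSumLimit s t (youngSummand H' (bracket X XX₁)) _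
    rw [youngSummand_bracket (H := H)]
    exact ((hIg s t hs ht).sub (hI₁ s t hs ht)).const_smul 2
  · simp only [Pi.smul_apply, Pi.sub_apply, smul_eq_mul]
    ring

/-- Rough integrals against two rough paths with common trace differ by a
Young integral of the Gubinelli derivative against `D = 𝕏₂ − 𝕏₁`; in particular the
geometrisation correction is `½ ∫ H' d[𝐗₁]`. -/
theorem statement17 (T p : ℝ) (hT : 0 ≤ T) (hp1 : 1 ≤ p) (hp3 : p < 3) (d e : ℕ)
    (ω : ℝ → ℝ → ℝ) (hω : IsControl T ω)
    (X : ℝ → Fin d → ℝ) (XX₁ XX₂ : ℝ → ℝ → Fin d → Fin d → ℝ)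
    (hX₁ : IsRoughPath T p ω X XX₁) (hX₂ : IsRoughPath T p ω X XX₂)
    (H : ℝ → Fin e → Fin d → ℝ) (H' : ℝ → Fin d → Fin e → Fin d → ℝ)
    (hH : IsControlledPath T p ω X H H') :
    (∀ s u t : ℝ, 0 ≤ s → s ≤ u → u ≤ t → t ≤ T → ∀ α β : Fin d,
      XX₂ s t α β - XX₁ s t α β =
        (XX₂ s u α β - XX₁ s u α β) + (XX₂ u t α β - XX₁ u t α β)) ∧
    (∃ C : ℝ, ∀ s t : ℝ, 0 ≤ s → s ≤ t → t ≤ T →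
      ‖(fun (α β : Fin d) => XX₂ s t α β - XX₁ s t α β)‖ ≤ C * ω s t ^ (2 / p)) ∧
    ∃ I₁ I₂ J Ig Jb : ℝ → ℝ → Fin e → ℝ,
      (∀ s t : ℝ, 0 ≤ s → s ≤ t → t ≤ T →
        RSumLimit s t (roughSummand X XX₁ H H') (I₁ s t)) ∧
      (∀ s t : ℝ, 0 ≤ s → s ≤ t → t ≤ T →
        RSumLimit s t (roughSummand X XX₂ H H') (I₂ s t)) ∧
      (∀ s t : ℝ, 0 ≤ s → s ≤ t → t ≤ T →
        RSumLimit s t (fun (u v : ℝ) (k : Fin e) =>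
          ∑ α, ∑ β, H' u α k β * (XX₂ u v α β - XX₁ u v α β)) (J s t)) ∧
      (∀ s t : ℝ, 0 ≤ s → s ≤ t → t ≤ T → I₂ s t = I₁ s t + J s t) ∧
      (∀ s t : ℝ, 0 ≤ s → s ≤ t → t ≤ T →
        RSumLimit s t (roughSummand X
          (fun u v α β => (XX₁ u v α β - XX₁ u v β α) / 2 +
            (X v α - X u α) * (X v β - X u β) / 2) H H') (Ig s t)) ∧
      (∀ s t : ℝ, 0 ≤ s → s ≤ t → t ≤ T →
        RSumLimit s t (fun (u v : ℝ) (k : Fin e) =>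
          ∑ α, ∑ β, H' u α k β * bracket X XX₁ u v α β) (Jb s t)) ∧
      (∀ s t : ℝ, 0 ≤ s → s ≤ t → t ≤ T → ∀ k : Fin e,
        Ig s t k = I₁ s t k + Jb s t k / 2) :=
  statement17_general T p hp1 hp3 d e ω hω X XX₁ XX₂ hX₁ hX₂ H H' hH
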